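/- Let r ≥ 2 and let n₁,…,n_r ≥ 1 be integers with n = n₁+⋯+n_r. Let π be a non-crossing partition of [n] without singleton blocks that respects the interval partition n₁⊗⋯⊗n_r with blocks B₁,…,B_r, where B_s = {b₁^s,…,b_{n_s}^s} listed in increasing order. Fix s ∈ {1,…,r−1} and suppose that the pair {b_{n_s}^s, b₁^{s+1}} (the last element of B_s together with the first element of B_{s+1}) is a block of π. If π has exactly ℓ ≥ 1 blocks of cardinality two linking B_s and B_{s+1}, then these ℓ blocks are precisely {b_{n_s}^s, b₁^{s+1}}, {b_{n_s−1}^s, b₂^{s+1}}, …, {b_{n_s−ℓ+1}^s, b_ℓ^{s+1}}. -/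

import Mathlib

open MeasureTheory Filter Finset Topology
open scoped ENNReal

noncomputable section

/-- The index set of the tensor space `ℝ₊^{n 0} ⊗ ⋯ ⊗ ℝ₊^{n (r-1)}`:
positions grouped into `r` consecutive interval blocks of sizes `n i`. -/
abbrev MIdx {r : ℕ} (n : Fin r → ℕ) : Type := Σ i : Fin r, Fin (n i)

/-- The (lexicographic) linear order of the positions in `MIdx n`, corresponding to the
usual order of `{1, …, n₁ + ⋯ + n_r}`. -/
def mlt {r : ℕ} {n : Fin r → ℕ} (a b : MIdx n) : Prop :=
  a.1 < b.1 ∨ (a.1 = b.1 ∧ (a.2 : ℕ) < (b.2 : ℕ))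

/-- The nonnegative orthant `ℝ₊^ι`. -/
def orth (ι : Type*) : Set (ι → ℝ) := {t | ∀ i, 0 ≤ t i}

/-- `π` is a partition of the type `ι`: the blocks are nonempty and every element belongs
to exactly one block. -/
def IsPartition {ι : Type*} (π : Finset (Finset ι)) : Prop :=
  (∀ B ∈ π, B.Nonempty) ∧ ∀ j : ι, ∃! B, B ∈ π ∧ j ∈ B

/-- `π` has no singleton blocks. -/
def NoSingletons {ι : Type*} (π : Finset (Finset ι)) : Prop := ∀ B ∈ π, 2 ≤ B.card

/-- All blocks of `π` have cardinality two. -/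
def IsPairing {ι : Type*} (π : Finset (Finset ι)) : Prop := ∀ B ∈ π, B.card = 2

/-- `π` has at least one block of cardinality at least three. -/
def HasBigBlock {ι : Type*} (π : Finset (Finset ι)) : Prop := ∃ B ∈ π, 3 ≤ B.card

/-- `π` respects the grouping given by the labelling `lbl`: no block contains two distinct
elements with the same label. -/
def RespectsG {ι κ : Type*} (lbl : ι → κ) (π : Finset (Finset ι)) : Prop :=
  ∀ B ∈ π, ∀ a ∈ B, ∀ b ∈ B, lbl a = lbl b → a = b

/-- `π` is non-crossing with respect to the order `lt`. -/
def NonCrossingG {ι : Type*} (lt : ι → ι → Prop) (π : Finset (Finset ι)) : Prop :=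
  ∀ B₁ ∈ π, ∀ B₂ ∈ π, B₁ ≠ B₂ → ∀ x₁ ∈ B₁, ∀ y₁ ∈ B₁, ∀ x₂ ∈ B₂, ∀ y₂ ∈ B₂,
    ¬ (lt x₁ x₂ ∧ lt x₂ y₁ ∧ lt y₁ y₂)

/-- some block of `π` contains an element labelled `i` and an element labelled `j`. -/
def LinksG {ι κ : Type*} (lbl : ι → κ) (π : Finset (Finset ι)) (i j : κ) : Prop :=
  ∃ B ∈ π, (∃ a ∈ B, lbl a = i) ∧ (∃ b ∈ B, lbl b = j)

/-- the graph on the labels in `S`, with edges given by `LinksG`, is connected. -/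
def ConnectsG {ι κ : Type*} (lbl : ι → κ) (π : Finset (Finset ι)) (S : Set κ) : Prop :=
  ∀ i ∈ S, ∀ j ∈ S, Relation.ReflTransGen (LinksG lbl π) i j

/-- `π` respects the interval partition `n₁ ⊗ ⋯ ⊗ n_r`. -/
abbrev Respects {r : ℕ} {n : Fin r → ℕ} (π : Finset (Finset (MIdx n))) : Prop :=
  RespectsG Sigma.fst π

/-- `π` is non-crossing (with respect to the order of positions). -/
abbrev NonCrossing {r : ℕ} {n : Fin r → ℕ} (π : Finset (Finset (MIdx n))) : Prop :=
  NonCrossingG mlt π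

/-- `π` connects the interval partition `n₁ ⊗ ⋯ ⊗ n_r`. -/
abbrev Connects {r : ℕ} {n : Fin r → ℕ} (π : Finset (Finset (MIdx n))) : Prop :=
  ConnectsG Sigma.fst π Set.univ

open scoped Classical in
/-- A block of `π` containing `j` (junk value `∅` if there is none). -/
def blockOf {ι : Type*} (π : Finset (Finset ι)) (j : ι) : Finset ι :=
  if h : ∃ B ∈ π, j ∈ B then h.choose else ∅

/-- The partition integral `∫_π f`: the integral, over the nonnegative orthant indexed by the
blocks of `π`, of the function obtained from `f` by identifying the variables lying in a
common block of `π` (one integration variable per block). -/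
def partInt {ι : Type*} [Fintype ι] [DecidableEq ι] (π : Finset (Finset ι))
    {E : Type*} [NormedAddCommGroup E] [NormedSpace ℝ E] (f : (ι → ℝ) → E) : E :=
  ∫ y in orth {B : Finset ι // B ∈ π},
    f (fun j => if h : blockOf π j ∈ π then y ⟨blockOf π j, h⟩ else 0)

/-- The tensor product `F 0 ⊗ ⋯ ⊗ F (r-1)` as a function on `ℝ^{MIdx n}`. -/
def tensor {r : ℕ} {n : Fin r → ℕ} {E : Type*} [CommMonoid E]
    (F : ∀ i : Fin r, (Fin (n i) → ℝ) → E) : (MIdx n → ℝ) → E :=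
  fun t => ∏ i : Fin r, F i (fun j => t ⟨i, j⟩)

/-- Extension of a vector `t ∈ ℝ^k` to an everywhere-defined family (zero out of range). -/
def ext {k : ℕ} (t : Fin k → ℝ) (j : ℕ) : ℝ := if h : j < k then t ⟨j, h⟩ else 0

/-- The `p`-th arc contraction `f ⌢_p g`: the middle `p` variables are integrated out
(in reversed pairing) over `ℝ₊^p`. -/
def arcC (n m p : ℕ) (f : (Fin n → ℝ) → ℂ) (g : (Fin m → ℝ) → ℂ) :
    (Fin (n + m - 2 * p) → ℝ) → ℂ := fun t =>
  ∫ s in orth (Fin p),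
    f (fun j => if (j : ℕ) < n - p then ext t (j : ℕ) else ext s ((j : ℕ) - (n - p))) *
    g (fun j => if (j : ℕ) < p then ext s (p - 1 - (j : ℕ)) else ext t (n - p + ((j : ℕ) - p)))

/-- The `q`-th star contraction `f ⋆_q g` (also written `f ⋆_q^{q-1} g`): `q - 1` middle
variables are integrated out over `ℝ₊^{q-1}` and one variable is shared (identified). -/
def starC (n m q : ℕ) (f : (Fin n → ℝ) → ℂ) (g : (Fin m → ℝ) → ℂ) :
    (Fin (n + m - 2 * q + 1) → ℝ) → ℂ := fun t =>
  ∫ s in orth (Fin (q - 1)),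
    f (fun j => if (j : ℕ) < n - q + 1 then ext t (j : ℕ) else ext s ((j : ℕ) - (n - q + 1))) *
    g (fun j => if (j : ℕ) < q - 1 then ext s (q - 1 - 1 - (j : ℕ))
        else ext t (n - q + ((j : ℕ) - (q - 1))))

/-- `f ⋆_{ℓ+p}^{ℓ} g` : the contraction with `ℓ` integrated variables and `p ∈ {0,1}`
identified variables; for `p = 0` this is the arc contraction `f ⌢_ℓ g`, and for `p = 1`
it is the star contraction `f ⋆_{ℓ+1} g`. -/
def starpC (n m ℓ p : ℕ) (f : (Fin n → ℝ) → ℂ) (g : (Fin m → ℝ) → ℂ) :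
    (Fin (n + m - 2 * ℓ - p) → ℝ) → ℂ := fun t =>
  if p = 0 then arcC n m ℓ f g (fun j => ext t (j : ℕ))
  else starC n m (ℓ + 1) f g (fun j => ext t (j : ℕ))

/-- The `L²(ℝ₊^ι)` norm. -/
def l2norm {ι : Type*} [Fintype ι] (h : (ι → ℝ) → ℂ) : ℝ≥0∞ :=
  eLpNorm h 2 (volume.restrict (orth ι))

/-- `f` is mirror-symmetric: `f(t₁,…,tₙ) = conj (f(tₙ,…,t₁))` for a.e. `t ∈ ℝ₊ⁿ`. -/
def MirrorSymmetric {n : ℕ} (f : (Fin n → ℝ) → ℂ) : Prop :=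
  ∀ᵐ t ∂(volume.restrict (orth (Fin n))), f t = (starRingEnd ℂ) (f (fun i => t i.rev))

/-- `f` is bounded and has bounded support. -/
def BddBddSupp {n : ℕ} (f : (Fin n → ℝ) → ℂ) : Prop :=
  (∃ C, ∀ t, ‖f t‖ ≤ C) ∧ ∃ R, ∀ t, f t ≠ 0 → ∀ i, |t i| ≤ R

/-- The sequence `f` is tamed: every `f k` is bounded with bounded support and, for every
`p ≥ 2` and every partition `π` of `[pn]` without singletons respecting `n ⊗ ⋯ ⊗ n`
(`p` factors), the sequence `k ↦ ∫_π |f k|^{⊗p}` is bounded. -/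
def Tamed {n : ℕ} (f : ℕ → (Fin n → ℝ) → ℂ) : Prop :=
  (∀ k, BddBddSupp (f k)) ∧
  ∀ p : ℕ, 2 ≤ p → ∀ π : Finset (Finset (MIdx (fun _ : Fin p => n))),
    IsPartition π → NoSingletons π → Respects π →
    ∃ C : ℝ, ∀ k, partInt π (tensor (fun _ x => ‖f k x‖)) ≤ C

open scoped Classical in
/-- `∑_{π ∈ NC_{≥2}(n_{i₁} ⊗ ⋯ ⊗ n_{i_r})} ∫_π f^{(i₁)} ⊗ ⋯ ⊗ f^{(i_r)}`, which by the
diagram formula is the joint moment `φ[I(f^{(i₁)}) ⋯ I(f^{(i_r)})]`. -/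
def momentSum {d : ℕ} (n : Fin d → ℕ) {r : ℕ} (idx : Fin r → Fin d)
    (f : ∀ i : Fin d, (Fin (n i) → ℝ) → ℂ) : ℂ :=
  ∑ π ∈ Finset.univ.filter
      (fun π : Finset (Finset (MIdx (fun a => n (idx a)))) =>
        IsPartition π ∧ NoSingletons π ∧ NonCrossing π ∧ Respects π),
    partInt π (tensor (fun a => f (idx a)))

open scoped Classical in
/-- `∑_{π ∈ NC_{≥2+}(n_{i₁} ⊗ ⋯ ⊗ n_{i_r})} ∫_π f^{(i₁)} ⊗ ⋯ ⊗ f^{(i_r)}`: the part of the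
diagram sum over partitions having at least one block of cardinality at least `3`. -/
def momentSumPlus {d : ℕ} (n : Fin d → ℕ) {r : ℕ} (idx : Fin r → Fin d)
    (f : ∀ i : Fin d, (Fin (n i) → ℝ) → ℂ) : ℂ :=
  ∑ π ∈ Finset.univ.filter
      (fun π : Finset (Finset (MIdx (fun a => n (idx a)))) =>
        IsPartition π ∧ NoSingletons π ∧ HasBigBlock π ∧ NonCrossing π ∧ Respects π),
    partInt π (tensor (fun a => f (idx a)))

open scoped Classical in
/-- `∑_{π ∈ NC₂(n_{i₁} ⊗ ⋯ ⊗ n_{i_r})} ∫_π f^{(i₁)} ⊗ ⋯ ⊗ f^{(i_r)}`: the part of the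
diagram sum over non-crossing (respecting) pairings. -/
def pairingSum {d : ℕ} (n : Fin d → ℕ) {r : ℕ} (idx : Fin r → Fin d)
    (f : ∀ i : Fin d, (Fin (n i) → ℝ) → ℂ) : ℂ :=
  ∑ π ∈ Finset.univ.filter
      (fun π : Finset (Finset (MIdx (fun a => n (idx a)))) =>
        IsPartition π ∧ IsPairing π ∧ NonCrossing π ∧ Respects π),
    partInt π (tensor (fun a => f (idx a)))

open scoped Classical in
/-- `∏_{{a,b} ∈ σ} c(i_a, i_b)` for a pairing `σ` of `Fin r`. -/
def pairProd {r d : ℕ} (c : Matrix (Fin d) (Fin d) ℝ) (idx : Fin r → Fin d)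
    (σ : Finset (Finset (Fin r))) : ℝ :=
  ∏ B ∈ σ, if h : B.Nonempty then c (idx (B.min' h)) (idx (B.max' h)) else 1

open scoped Classical in
/-- `∑_{σ ∈ NC₂(r)} ∏_{{a,b} ∈ σ} c(i_a, i_b)`: the joint moment
`φ(s_{i₁} ⋯ s_{i_r})` of a semicircular family with covariance `c`. -/
def semicircMoment {r d : ℕ} (c : Matrix (Fin d) (Fin d) ℝ) (idx : Fin r → Fin d) : ℝ :=
  ∑ σ ∈ Finset.univ.filter
      (fun σ : Finset (Finset (Fin r)) =>
        IsPartition σ ∧ IsPairing σ ∧ NonCrossingG (· < ·) σ),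
    pairProd c idx σ

/-! Let `V` be a block containing `⟨s, a⟩` and `⟨t, b⟩`, where `t = s + 1`. By non-crossing, the
block of any position strictly between them lies strictly between them, so it only meets the
positions of `B_s` after `a` and those of `B_t` before `b`; respecting the intervals and having
no singletons, it is a pair with one point on each side. Counting these pairs once from each
side gives `a + 1 + b = n s`, and the blocks of `⟨t, 0⟩, …, ⟨t, b⟩` are `b + 1` distinct pairs
linking `B_s` and `B_t`, so `b < ℓ`. -/

namespace IsPartition

variable {ι : Type*} {π : Finset (Finset ι)}

lemma blockOf_spec (hπ : IsPartition π) (u : ι) : blockOf π u ∈ π ∧ u ∈ blockOf π u := by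
  have h : ∃ B ∈ π, u ∈ B := (hπ.2 u).exists
  rw [blockOf, dif_pos h]
  exact h.choose_spec

lemma blockOf_mem (hπ : IsPartition π) (u : ι) : blockOf π u ∈ π :=
  (hπ.blockOf_spec u).1

lemma mem_blockOf (hπ : IsPartition π) (u : ι) : u ∈ blockOf π u :=
  (hπ.blockOf_spec u).2

lemma blockOf_eq (hπ : IsPartition π) {W : Finset ι} {u : ι} (hW : W ∈ π) (hu : u ∈ W) :
    blockOf π u = W :=
  (hπ.2 u).unique ⟨hπ.blockOf_mem u, hπ.mem_blockOf u⟩ ⟨hW, hu⟩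

lemma eq_of_blockOf_eq {κ : Type*} {lbl : ι → κ} (hπ : IsPartition π) (hresp : RespectsG lbl π)
    {u v : ι} (hlbl : lbl u = lbl v) (h : blockOf π u = blockOf π v) : u = v :=
  hresp _ (hπ.blockOf_mem u) u (hπ.mem_blockOf u) v (h ▸ hπ.mem_blockOf v) hlbl

end IsPartition

lemma RespectsG.card_eq_two_of_labels_subset {ι κ : Type*} [DecidableEq κ] {lbl : ι → κ}
    {π : Finset (Finset ι)} (hresp : RespectsG lbl π) {W : Finset ι} (hW : W ∈ π)
    (h2 : 2 ≤ W.card) {i j : κ} (hlbl : ∀ w ∈ W, lbl w = i ∨ lbl w = j) :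
    W.card = 2 ∧ (∃ w ∈ W, lbl w = i) ∧ ∃ w ∈ W, lbl w = j := by
  have hinj : Set.InjOn lbl W := fun u hu v hv => hresp W hW u hu v hv
  have hsub : W.image lbl ⊆ {i, j} := by
    simpa [Finset.image_subset_iff] using hlbl
  have himage : W.image lbl = {i, j} := by
    refine Finset.eq_of_subset_of_card_le hsub ?_
    rw [Finset.card_image_of_injOn hinj]
    exact Finset.card_le_two.trans h2
  have hcard : W.card ≤ 2 := by
    rw [← Finset.card_image_of_injOn hinj, himage]
    exact Finset.card_le_two
  refine ⟨le_antisymm hcard h2, ?_, ?_⟩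
  · exact Finset.mem_image.1 (himage ▸ Finset.mem_insert_self i {j} : i ∈ W.image lbl)
  · exact Finset.mem_image.1 (himage ▸ Finset.mem_insert_of_mem (Finset.mem_singleton_self j) :
      j ∈ W.image lbl)

lemma NonCrossingG.lt_and_lt_of_mem_blockOf {ι : Type*} {lt : ι → ι → Prop}
    [Std.Trichotomous lt] {π : Finset (Finset ι)} (hπ : IsPartition π) (hnc : NonCrossingG lt π)
    {V : Finset ι} (hV : V ∈ π) {x y u : ι} (hx : x ∈ V) (hy : y ∈ V) (hu : u ∉ V)
    (hxu : lt x u) (huy : lt u y) {w : ι} (hw : w ∈ blockOf π u) : lt x w ∧ lt w y := by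
  have hW := hπ.blockOf_mem u
  have huW := hπ.mem_blockOf u
  have hWV : blockOf π u ≠ V := fun h => hu (h ▸ huW)
  have hnotin : ∀ z ∈ V, w ≠ z := by
    rintro z hz rfl
    exact hWV ((hπ.blockOf_eq hW hw).symm.trans (hπ.blockOf_eq hV hz))
  have hxw : lt x w := by
    rcases trichotomous_of lt w x with h | h | h
    · exact absurd ⟨h, hxu, huy⟩ (hnc _ hW V hV hWV w hw u huW x hx y hy)
    · exact absurd h (hnotin x hx)
    · exact h
  refine ⟨hxw, ?_⟩
  rcases trichotomous_of lt w y with h | h | h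
  · exact h
  · exact absurd h (hnotin y hy)
  · exact absurd ⟨hxu, huy, h⟩ (hnc V hV _ hW hWV.symm x hx y hy u huW w hw)

section AdjacentIntervals

variable {r : ℕ} {n : Fin r → ℕ}

instance : Std.Trichotomous (mlt (n := n)) where
  trichotomous a b hab hba := by
    obtain ⟨i, a⟩ := a
    obtain ⟨j, b⟩ := b
    simp only [mlt, not_or, not_and, not_lt] at hab hba
    obtain rfl : i = j := le_antisymm hba.1 hab.1
    simp only [forall_const] at hab hba
    rw [Fin.le_antisymm (Fin.le_def.2 hba.2) (Fin.le_def.2 hab.2)]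

lemma mlt_irrefl (u : MIdx n) : ¬ mlt u u := by
  simp [mlt]

variable {s t : Fin r}

lemma mlt_of_adjacent (hst : (t : ℕ) = s + 1) (a : Fin (n s)) (b : Fin (n t)) :
    mlt (⟨s, a⟩ : MIdx n) ⟨t, b⟩ :=
  Or.inl (show s < t from Fin.lt_def.2 (by omega))

lemma mlt_between_adjacent (hst : (t : ℕ) = s + 1) {a : Fin (n s)} {b : Fin (n t)} {u : MIdx n}
    (hau : mlt ⟨s, a⟩ u) (hub : mlt u ⟨t, b⟩) :
    (∃ x, a < x ∧ u = ⟨s, x⟩) ∨ ∃ j, j < b ∧ u = ⟨t, j⟩ := by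
  obtain ⟨i, x⟩ := u
  rcases hau with hsi | ⟨rfl, hax⟩
  · rcases hub with hit | ⟨rfl, hxb⟩
    · simp only [Fin.lt_def] at hsi hit
      omega
    · exact Or.inr ⟨x, hxb, rfl⟩
  · exact Or.inl ⟨x, hax, rfl⟩

variable {π : Finset (Finset (MIdx n))}

lemma blockOf_mk_injective (hpart : IsPartition π) (hresp : Respects π) (i : Fin r) :
    Function.Injective (fun x : Fin (n i) => blockOf π ⟨i, x⟩) := fun x y h =>
  eq_of_heq (Sigma.mk.inj (hpart.eq_of_blockOf_eq hresp (u := ⟨i, x⟩) (v := ⟨i, y⟩) rfl h)).2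

lemma notMem_of_between_adjacent (hresp : Respects π) (hst : (t : ℕ) = s + 1)
    {V : Finset (MIdx n)} (hV : V ∈ π) {a : Fin (n s)} {b : Fin (n t)}
    (ha : ⟨s, a⟩ ∈ V) (hb : ⟨t, b⟩ ∈ V) {u : MIdx n}
    (hau : mlt ⟨s, a⟩ u) (hub : mlt u ⟨t, b⟩) : u ∉ V := by
  intro hu
  rcases mlt_between_adjacent hst hau hub with ⟨x, -, rfl⟩ | ⟨j, -, rfl⟩
  · rw [hresp V hV _ ha _ hu rfl] at hau
    exact mlt_irrefl _ hau
  · rw [hresp V hV _ hu _ hb rfl] at hub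
    exact mlt_irrefl _ hub

lemma blockOf_between_adjacent (hpart : IsPartition π) (hns : NoSingletons π)
    (hnc : NonCrossing π) (hresp : Respects π) (hst : (t : ℕ) = s + 1)
    {V : Finset (MIdx n)} (hV : V ∈ π) {a : Fin (n s)} {b : Fin (n t)}
    (ha : ⟨s, a⟩ ∈ V) (hb : ⟨t, b⟩ ∈ V) {u : MIdx n}
    (hau : mlt ⟨s, a⟩ u) (hub : mlt u ⟨t, b⟩) :
    (blockOf π u).card = 2 ∧ (∃ x, a < x ∧ ⟨s, x⟩ ∈ blockOf π u) ∧
      ∃ j, j < b ∧ ⟨t, j⟩ ∈ blockOf π u := by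
  have hbetween : ∀ w ∈ blockOf π u, (∃ x, a < x ∧ w = ⟨s, x⟩) ∨ ∃ j, j < b ∧ w = ⟨t, j⟩ :=
    fun w hw =>
      have h := hnc.lt_and_lt_of_mem_blockOf hpart hV ha hb
        (notMem_of_between_adjacent hresp hst hV ha hb hau hub) hau hub hw
      mlt_between_adjacent hst h.1 h.2
  have hts : t ≠ s := fun h => by rw [h] at hst; omega
  obtain ⟨hcard, ⟨ws, hws, hwsl⟩, wt, hwt, hwtl⟩ :=
    hresp.card_eq_two_of_labels_subset (hpart.blockOf_mem u) (hns _ (hpart.blockOf_mem u))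
      (i := s) (j := t) fun w hw => by
        rcases hbetween w hw with ⟨x, -, rfl⟩ | ⟨j, -, rfl⟩ <;> simp
  refine ⟨hcard, ?_, ?_⟩
  · rcases hbetween ws hws with ⟨x, hx, rfl⟩ | ⟨j, -, rfl⟩
    · exact ⟨x, hx, hws⟩
    · exact absurd hwsl hts
  · rcases hbetween wt hwt with ⟨x, -, rfl⟩ | ⟨j, hj, rfl⟩
    · exact absurd hwtl.symm hts
    · exact ⟨j, hj, hwt⟩

lemma val_add_one_add_val_eq (hpart : IsPartition π) (hns : NoSingletons π)
    (hnc : NonCrossing π) (hresp : Respects π) (hst : (t : ℕ) = s + 1)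
    {V : Finset (MIdx n)} (hV : V ∈ π) {a : Fin (n s)} {b : Fin (n t)}
    (ha : ⟨s, a⟩ ∈ V) (hb : ⟨t, b⟩ ∈ V) : (a : ℕ) + 1 + b = n s := by
  have himage : (Finset.Iio b).image (fun j => blockOf π ⟨t, j⟩) =
      (Finset.Ioi a).image (fun x => blockOf π ⟨s, x⟩) := by
    ext W
    simp only [Finset.mem_image, Finset.mem_Iio, Finset.mem_Ioi]
    constructor
    · rintro ⟨j, hj, rfl⟩
      obtain ⟨-, ⟨x, hx, hxW⟩, -⟩ := blockOf_between_adjacent hpart hns hnc hresp hst hV ha hb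
        (u := ⟨t, j⟩) (mlt_of_adjacent hst a j) (Or.inr ⟨rfl, hj⟩)
      exact ⟨x, hx, hpart.blockOf_eq (hpart.blockOf_mem _) hxW⟩
    · rintro ⟨x, hx, rfl⟩
      obtain ⟨-, -, j, hj, hjW⟩ := blockOf_between_adjacent hpart hns hnc hresp hst hV ha hb
        (u := ⟨s, x⟩) (Or.inr ⟨rfl, hx⟩) (mlt_of_adjacent hst x b)
      exact ⟨j, hj, hpart.blockOf_eq (hpart.blockOf_mem _) hjW⟩
  have hcard := congrArg Finset.card himage
  rw [Finset.card_image_of_injective _ (blockOf_mk_injective hpart hresp t),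
    Finset.card_image_of_injective _ (blockOf_mk_injective hpart hresp s),
    Fin.card_Iio, Fin.card_Ioi] at hcard
  have := a.isLt
  omega

open scoped Classical in
lemma val_lt_card_linking_pairs (hpart : IsPartition π) (hns : NoSingletons π)
    (hnc : NonCrossing π) (hresp : Respects π) (hst : (t : ℕ) = s + 1)
    {V : Finset (MIdx n)} (hV : V ∈ π) (hV2 : V.card = 2) {a : Fin (n s)} {b : Fin (n t)}
    (ha : ⟨s, a⟩ ∈ V) (hb : ⟨t, b⟩ ∈ V) :
    (b : ℕ) < (π.filter (fun V => V.card = 2 ∧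
      (∃ a ∈ V, a.1 = s) ∧ (∃ b ∈ V, b.1 = t))).card := by
  rw [← Nat.add_one_le_iff, ← Fin.card_Iic]
  refine Finset.card_le_card_of_injOn _ (fun j hj => ?_) (blockOf_mk_injective hpart hresp t).injOn
  rw [Finset.mem_coe, Finset.mem_Iic] at hj
  rw [Finset.mem_coe, Finset.mem_filter]
  rcases hj.lt_or_eq with hj | rfl
  · obtain ⟨hcard, ⟨x, -, hx⟩, j', -, hj'⟩ := blockOf_between_adjacent hpart hns hnc hresp hst
      hV ha hb (u := ⟨t, j⟩) (mlt_of_adjacent hst a j) (Or.inr ⟨rfl, hj⟩)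
    exact ⟨hpart.blockOf_mem _, hcard, ⟨_, hx, rfl⟩, _, hj', rfl⟩
  · rw [hpart.blockOf_eq hV hb]
    exact ⟨hV, hV2, ⟨_, ha, rfl⟩, _, hb, rfl⟩

end AdjacentIntervals

open scoped Classical in
theorem pair_blocks_linking_adjacent_are_nested_general
    (r : ℕ) (n : Fin r → ℕ)
    (π : Finset (Finset (MIdx n)))
    (hpart : IsPartition π) (hns : NoSingletons π) (hnc : NonCrossing π) (hresp : Respects π)
    (s t : Fin r) (hst : (t : ℕ) = (s : ℕ) + 1)
    (ℓ : ℕ)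
    (hcard : (π.filter (fun V => V.card = 2 ∧
        (∃ a ∈ V, a.1 = s) ∧ (∃ b ∈ V, b.1 = t))).card = ℓ) :
    ∀ V ∈ π,
      ((V.card = 2 ∧ (∃ a ∈ V, a.1 = s) ∧ (∃ b ∈ V, b.1 = t)) ↔
        (∃ i : ℕ, i < ℓ ∧ V.card = 2 ∧
          (∃ a ∈ V, a.1 = s ∧ (a.2 : ℕ) + 1 + i = n s) ∧
          (∃ b ∈ V, b.1 = t ∧ (b.2 : ℕ) = i))) := by
  intro V hV
  constructor
  · rintro ⟨hV2, ⟨⟨_, a⟩, ha, rfl⟩, ⟨_, b⟩, hb, rfl⟩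
    exact ⟨b, hcard ▸ val_lt_card_linking_pairs hpart hns hnc hresp hst hV hV2 ha hb, hV2,
      ⟨_, ha, rfl, val_add_one_add_val_eq hpart hns hnc hresp hst hV ha hb⟩, _, hb, rfl, rfl⟩
  · rintro ⟨-, -, hV2, ⟨a, ha, has, -⟩, b, hb, hbt, -⟩
    exact ⟨hV2, ⟨a, ha, has⟩, b, hb, hbt⟩

open scoped Classical in
/-- if the pair `{last of B_s, first of B_{s+1}}` is a block of a
non-crossing respecting partition without singletons, and exactly `ℓ ≥ 1` blocks of
cardinality two link `B_s` and `B_{s+1}`, then these are precisely the nested pairs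
`{b^s_{n_s - i}, b^{s+1}_{i+1}}`, `i = 0, …, ℓ - 1`. -/
theorem pair_blocks_linking_adjacent_are_nested
    (r : ℕ) (hr : 2 ≤ r) (n : Fin r → ℕ) (hn : ∀ i, 1 ≤ n i)
    (π : Finset (Finset (MIdx n)))
    (hpart : IsPartition π) (hns : NoSingletons π) (hnc : NonCrossing π) (hresp : Respects π)
    (s t : Fin r) (hst : (t : ℕ) = (s : ℕ) + 1)
    (hpair : ∃ V ∈ π, V.card = 2 ∧
      (∃ a ∈ V, a.1 = s ∧ (a.2 : ℕ) + 1 = n s) ∧ (∃ b ∈ V, b.1 = t ∧ (b.2 : ℕ) = 0))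
    (ℓ : ℕ) (hℓ : 1 ≤ ℓ)
    (hcard : (π.filter (fun V => V.card = 2 ∧
        (∃ a ∈ V, a.1 = s) ∧ (∃ b ∈ V, b.1 = t))).card = ℓ) :
    ∀ V ∈ π,
      ((V.card = 2 ∧ (∃ a ∈ V, a.1 = s) ∧ (∃ b ∈ V, b.1 = t)) ↔
        (∃ i : ℕ, i < ℓ ∧ V.card = 2 ∧
          (∃ a ∈ V, a.1 = s ∧ (a.2 : ℕ) + 1 + i = n s) ∧
          (∃ b ∈ V, b.1 = t ∧ (b.2 : ℕ) = i))) :=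
  pair_blocks_linking_adjacent_are_nested_general r n π hpart hns hnc hresp s t hst ℓ hcard
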